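/- Fix N_x, N_y ≥ 2 and grid spacings Δx, Δy > 0. Index pressure points by U := Fin N_x × Fin N_y and staggered velocity points by V := (Fin (N_x−1) × Fin N_y) ⊕ (Fin N_x × Fin (N_y−1)). Define the discrete gradient G as the real V×U matrix with G(inl(k,j), (ℓ,m)) = ([ℓ = k+1] − [ℓ = k])·[m = j]/Δx and G(inr(k,j), (ℓ,m)) = ([m = j+1] − [m = j])·[ℓ = k]/Δy, and the discrete divergence D as the real U×V matrix with D((ℓ,m), inl(k,j)) = ([k = ℓ] − [k+1 = ℓ])·[j = m]/Δx and D((ℓ,m), inr(k,j)) = ([j = m] − [j+1 = m])·[ℓ = k]/Δy, where [·] is the 0/1 indicator and k+1, j+1 denote the canonical embeddings Fin(n−1) → Fin n shifted by one versus unshifted. Then D = −Gᵀ, and consequently the block matrix A = [[0, −D], [−G, 0]] (with zero blocks of sizes U×U and V×V) satisfies Aᵀ = −A, i.e., A is skew-symmetric. -/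

import Mathlib

open Matrix

theorem transpose_fromBlocks_zero_transpose_neg_zero {l m α : Type*} [AddGroup α] (G : Matrix m l α) :
    (fromBlocks 0 Gᵀ (-G) 0)ᵀ = -fromBlocks 0 Gᵀ (-G) 0 := by
  simp only [fromBlocks_transpose, fromBlocks_neg, transpose_neg, transpose_transpose,
    transpose_zero, neg_zero, neg_neg]

theorem staggered_grid_div_eq_neg_grad_transpose
    (nx ny : ℕ) (Δx Δy : ℝ) :
    let U := Fin (nx + 1) × Fin (ny + 1)
    let V := (Fin nx × Fin (ny + 1)) ⊕ (Fin (nx + 1) × Fin ny)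
    let G : Matrix V U ℝ := Matrix.of fun kv lm =>
      match kv with
      | Sum.inl (k, j) =>
          (((if lm.1 = k.succ then (1 : ℝ) else 0) -
              (if lm.1 = k.castSucc then 1 else 0)) *
            (if lm.2 = j then 1 else 0)) / Δx
      | Sum.inr (k, j) =>
          (((if lm.2 = j.succ then (1 : ℝ) else 0) -
              (if lm.2 = j.castSucc then 1 else 0)) *
            (if lm.1 = k then 1 else 0)) / Δy
    let D : Matrix U V ℝ := Matrix.of fun lm kv =>
      match kv with
      | Sum.inl (k, j) =>
          (((if k.castSucc = lm.1 then (1 : ℝ) else 0) -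
              (if k.succ = lm.1 then 1 else 0)) *
            (if j = lm.2 then 1 else 0)) / Δx
      | Sum.inr (k, j) =>
          (((if j.castSucc = lm.2 then (1 : ℝ) else 0) -
              (if j.succ = lm.2 then 1 else 0)) *
            (if k = lm.1 then 1 else 0)) / Δy
    let A : Matrix (U ⊕ V) (U ⊕ V) ℝ := fromBlocks 0 (-D) (-G) 0
    D = -Gᵀ ∧ Aᵀ = -A := by
  intro U V G D A
  have div_eq_neg_grad_transpose : D = -Gᵀ := by
    ext lm (⟨k, j⟩ | ⟨k, j⟩) <;>
      simp only [D, G, Matrix.neg_apply, Matrix.transpose_apply, Matrix.of_apply, eq_comm] <;> ring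
  refine ⟨div_eq_neg_grad_transpose, ?_⟩
  simpa only [A, div_eq_neg_grad_transpose, neg_neg] using
    transpose_fromBlocks_zero_transpose_neg_zero G
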